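/- arXiv:math/0308098 — 2 statements merged into one kernel-verified Lean document; each statement's English description precedes it below -/
import Mathlib

section
/- A linear subspace L ⊆ ℝ^n is an i-dimensional lattice plane of a lattice Λ if and only if its orthogonal complement L^⊥ is an (n−i)-dimensional lattice plane of the dual lattice Λ*. -/
open scoped RealInnerProductSpace Pointwise
open MeasureTheory Filter

noncomputable section

abbrev Euc (n : ℕ) := EuclideanSpace ℝ (Fin n)

/-- The set of all integer combinations of the family of vectors `v`. -/
def intSpan {n : ℕ} {ι : Type} [Fintype ι] (v : ι → Euc n) : Set (Euc n) :=
  {x | ∃ z : ι → ℤ, x = ∑ j, (z j : ℝ) • v j}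

/-- `Λ` is a (full-rank) lattice in `ℝⁿ`: the integer span of a basis of `ℝⁿ`. -/
def IsLattice {n : ℕ} (Λ : Set (Euc n)) : Prop :=
  ∃ b : Module.Basis (Fin n) ℝ (Euc n), Λ = intSpan ⇑b

/-- Gram determinant of a family of vectors. -/
def gramDet {n : ℕ} {ι : Type} [Fintype ι] [DecidableEq ι] (v : ι → Euc n) : ℝ :=
  Matrix.det (Matrix.of fun j k : ι => ⟪v j, v k⟫)

/-- The determinant (covolume) of the lattice with ℤ-basis `v`:
the square root of the Gram determinant. -/
def latDet {n : ℕ} {ι : Type} [Fintype ι] [DecidableEq ι] (v : ι → Euc n) : ℝ :=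
  Real.sqrt (gramDet v)

/-- `v` is a ℤ-basis of the set `S`: a linearly independent family whose
integer span is `S`. -/
def IsZBasis {n : ℕ} {ι : Type} [Fintype ι] (v : ι → Euc n) (S : Set (Euc n)) : Prop :=
  LinearIndependent ℝ v ∧ S = intSpan v

/-- The determinant (covolume) of a rank-`i` lattice `S` (independent of the
chosen ℤ-basis). -/
def detOf {n : ℕ} (i : ℕ) (S : Set (Euc n)) : ℝ :=
  sInf {d | ∃ v : Fin i → Euc n, IsZBasis v S ∧ d = latDet v}

/-- The dual (polar) lattice of `Λ`. -/
def dualLattice {n : ℕ} (Λ : Set (Euc n)) : Set (Euc n) :=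
  {y | ∀ x ∈ Λ, ∃ m : ℤ, ⟪x, y⟫ = (m : ℝ)}

/-- `L` is an `i`-dimensional lattice plane of `Λ`: `L` has dimension `i` and
`Λ ∩ L` spans `L`. -/
def IsLatticePlane {n : ℕ} (Λ : Set (Euc n)) (i : ℕ) (L : Submodule ℝ (Euc n)) : Prop :=
  Module.finrank ℝ L = i ∧ Submodule.span ℝ (Λ ∩ (L : Set (Euc n))) = L

/-- Orthogonal projection of a set onto the subspace `L`. -/
def projTo {n : ℕ} (L : Submodule ℝ (Euc n)) (S : Set (Euc n)) : Set (Euc n) :=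
  (fun x => ((L.orthogonalProjectionOnto x : L) : Euc n)) '' S

/-- Rankin's invariant (in the normalization `τ(n,i)` of Henk's paper). -/
def rankin (n i : ℕ) : ℝ :=
  sSup {r | ∃ Λ : Set (Euc n), IsLattice Λ ∧
    r = sInf {s | ∃ L : Submodule ℝ (Euc n), IsLatticePlane Λ i L ∧
      s = detOf i (Λ ∩ (L : Set (Euc n))) ^ ((1:ℝ)/i) / detOf n Λ ^ ((1:ℝ)/n)}}

/-- `S` is a packing set of `K`: distinct translates of `K` by elements of `S`
have disjoint interiors. -/
def IsPackingSet {n : ℕ} (K : Set (Euc n)) (S : Set (Euc n)) : Prop :=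
  ∀ b₁ ∈ S, ∀ b₂ ∈ S, b₁ ≠ b₂ → interior (b₁ +ᵥ K) ∩ interior (b₂ +ᵥ K) = ∅

/-- The packing radius `λ(K,Λ)`. -/
def packingRadius {n : ℕ} (K Λ : Set (Euc n)) : ℝ :=
  sSup {l : ℝ | 0 < l ∧ IsPackingSet (l • K) Λ}

/-- The covering radius `μ(K,Λ)`. -/
def coveringRadius {n : ℕ} (K Λ : Set (Euc n)) : ℝ :=
  sInf {m : ℝ | 0 < m ∧ Λ + m • K = Set.univ}

/-- `K` is a `0`-symmetric convex body with nonempty interior. -/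
def IsBody {n : ℕ} (K : Set (Euc n)) : Prop :=
  Convex ℝ K ∧ IsCompact K ∧ K = -K ∧ (interior K).Nonempty

/-- The density `δ(K)` of a densest lattice packing of `K`. -/
def packDensity {n : ℕ} (K : Set (Euc n)) : ℝ :=
  sSup {d | ∃ Λ : Set (Euc n), IsLattice Λ ∧ IsPackingSet K Λ ∧
    d = (volume K).toReal / detOf n Λ}

/-- The density `θ(K)` of a thinnest lattice covering of `K`. -/
def covDensity {n : ℕ} (K : Set (Euc n)) : ℝ :=
  sInf {d | ∃ Λ : Set (Euc n), IsLattice Λ ∧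
    d = (volume K).toReal * coveringRadius K Λ ^ n / detOf n Λ}

/-- Zong's simultaneous packing and covering constant `γ(K)`. -/
def gammaSim {n : ℕ} (K : Set (Euc n)) : ℝ :=
  sInf {r | ∃ Λ : Set (Euc n), IsLattice Λ ∧ r = coveringRadius K Λ / packingRadius K Λ}

/-- The `i`-th covering minimum `μᵢ(K,Λ)` of Kannan and Lovász. -/
def covMin {n : ℕ} (i : ℕ) (K Λ : Set (Euc n)) : ℝ :=
  sInf {m : ℝ | 0 < m ∧ ∀ A : AffineSubspace ℝ (Euc n), (A : Set (Euc n)).Nonempty →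
    Module.finrank ℝ A.direction = n - i → ((Λ + m • K) ∩ (A : Set (Euc n))).Nonempty}

/-- The generalized simultaneous constant `γᵢ(K)`. -/
def gammaI {n : ℕ} (i : ℕ) (K : Set (Euc n)) : ℝ :=
  sInf {r | ∃ Λ : Set (Euc n), IsLattice Λ ∧ r = covMin i K Λ / packingRadius K Λ}

/-- The projection functional `ρᵢ(K)`. -/
def rhoI {n : ℕ} (i : ℕ) (K : Set (Euc n)) : ℝ :=
  sSup {r | ∃ A : (Euc n) ≃ₗ[ℝ] (Euc n),
    r = sInf {s | ∃ L : Submodule ℝ (Euc n), Module.finrank ℝ L = i ∧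
      s = (volume (⇑A '' K)).toReal ^ ((1:ℝ)/n) /
        ((MeasureTheory.Measure.hausdorffMeasure (i:ℝ) (projTo L (⇑A '' K))).toReal) ^ ((1:ℝ)/i)}}

/-- Length of a shortest nonzero vector of `Λ`. -/
def lambdaOne {n : ℕ} (Λ : Set (Euc n)) : ℝ :=
  sInf {r | ∃ x ∈ Λ, x ≠ 0 ∧ r = ‖x‖}

/-- The (normalized) Hermite constant `τ(n,1)`. -/
def hermite (n : ℕ) : ℝ :=
  sSup {r | ∃ Λ : Set (Euc n), IsLattice Λ ∧ r = lambdaOne Λ / detOf n Λ ^ ((1:ℝ)/n)}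

/-- Volume of the `d`-dimensional unit ball. -/
def kappa (d : ℕ) : ℝ := Real.pi ^ ((d:ℝ)/2) / Real.Gamma ((d:ℝ)/2 + 1)

/-- Upper density of the arrangement `S + K`. -/
def setDensity {n : ℕ} (K S : Set (Euc n)) : ℝ :=
  Filter.limsup (fun r : ℝ =>
    (volume ((S + K) ∩ Metric.ball (0 : Euc n) r)).toReal /
    (volume (Metric.ball (0 : Euc n) r)).toReal) Filter.atTop

/-- The density `δ_T(K)` of a densest translative packing of `K`. -/
def transPackDensity {n : ℕ} (K : Set (Euc n)) : ℝ :=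
  sSup {d | ∃ S : Set (Euc n), IsPackingSet K S ∧ d = setDensity K S}


/-!
In the coordinates of a basis `b` of `Λ` and of its inner-product dual basis `b*`, which spans
`Λ*`, the inner product becomes the dot product. If `L` is spanned by `k` independent lattice
vectors with integer coordinate vectors `uᵢ`, then `Lᗮ` is the real solution space of the integer
system `uᵢ ⬝ᵥ w = 0`; rank-nullity over `ℤ` gives `n - k` independent integer solutions, which stay
independent over `ℝ`, so the corresponding vectors of `Λ*` span `Lᗮ`. The converse follows by
applying this to `Λ*` and `Lᗮ`, since `b** = b` and `Lᗮᗮ = L`.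
-/

open Module

theorem exists_linearIndependent_orthogonal_dotProduct {R S ι κ : Type*} [CommRing R]
    [IsDomain R] [CommRing S] [IsDomain S] [Algebra R S] [FaithfulSMul R S]
    [Fintype ι] [Fintype κ] (u : κ → ι → R) :
    ∃ w : Fin (Fintype.card ι - Fintype.card κ) → ι → R,
      LinearIndependent S (fun j ↦ algebraMap R S ∘ w j) ∧ ∀ i j, u i ⬝ᵥ w j = 0 := by
  set f := (Matrix.of u).mulVecLin
  have hker : Fintype.card ι - Fintype.card κ ≤ finrank R (LinearMap.ker f) := by
    have hsum := (LinearMap.ker f).finrank_quotient_add_finrank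
    have hrange : finrank R (LinearMap.range f) ≤ Fintype.card κ :=
      (Submodule.finrank_le _).trans (finrank_fintype_fun_eq_card R).le
    rw [f.quotKerEquivRange.finrank_eq, finrank_fintype_fun_eq_card] at hsum
    omega
  obtain ⟨w, hw⟩ := exists_linearIndependent_of_le_finrank hker
  refine ⟨fun j ↦ w j, linearIndependent_algebraMap_comp_iff.mpr
    (hw.map' _ (LinearMap.ker f).ker_subtype), fun i j ↦ ?_⟩
  exact congr_fun (LinearMap.mem_ker.mp (w j).2) i

section InnerDualBasis

variable {E ι : Type*} [NormedAddCommGroup E] [InnerProductSpace ℝ E] [DecidableEq ι]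

theorem nondegenerate_innerₗ : (innerₗ E).Nondegenerate :=
  ⟨fun x hx ↦ inner_self_eq_zero.mp (hx x), fun y hy ↦ inner_self_eq_zero.mp (hy y)⟩

def innerDualBasis [Finite ι] (b : Basis ι ℝ E) : Basis ι ℝ E :=
  LinearMap.BilinForm.dualBasis (innerₗ E) nondegenerate_innerₗ b

theorem innerDualBasis_innerDualBasis [Finite ι] (b : Basis ι ℝ E) :
    innerDualBasis (innerDualBasis b) = b :=
  LinearMap.BilinForm.dualBasis_dualBasis _ (LinearMap.BilinForm.isSymm_iff.mpr isSymm_inner) b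

theorem inner_sum_smul_innerDualBasis [Fintype ι] (b : Basis ι ℝ E) (x y : ι → ℝ) :
    ⟪∑ k, x k • b k, ∑ l, y l • innerDualBasis b l⟫ = x ⬝ᵥ y := by
  have hdual := LinearMap.BilinForm.apply_dualBasis_right nondegenerate_innerₗ
    (LinearMap.BilinForm.isSymm_iff.mpr isSymm_inner) b
  simp only [innerₗ_apply_apply] at hdual
  simp [innerDualBasis, sum_inner, inner_sum, real_inner_smul_left, real_inner_smul_right,
    hdual, dotProduct, mul_comm]

end InnerDualBasis

section DualLattice

variable {n : ℕ} {ι : Type} [Fintype ι]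

theorem intSpan_eq_span (v : ι → Euc n) : intSpan v = Submodule.span ℤ (Set.range v) := by
  ext x
  simp only [intSpan, SetLike.mem_coe, Submodule.mem_span_range_iff_exists_fun,
    Int.cast_smul_eq_zsmul, eq_comm]
  rfl

variable [DecidableEq ι]

theorem dualLattice_intSpan (b : Basis ι ℝ (Euc n)) :
    dualLattice (intSpan b) = intSpan (innerDualBasis b) := by
  rw [intSpan_eq_span, intSpan_eq_span, innerDualBasis,
    ← LinearMap.BilinForm.dualSubmodule_span_of_basis (R := ℤ) _ nondegenerate_innerₗ b]
  ext y
  simp only [dualLattice, Set.mem_ofPred_eq, SetLike.mem_coe,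
    LinearMap.BilinForm.mem_dualSubmodule, Submodule.mem_one, innerₗ_apply_apply,
    algebraMap_int_eq, eq_intCast, real_inner_comm y, eq_comm]

theorem span_intSpan_innerDualBasis_inter_orthogonal (b : Basis ι ℝ (Euc n))
    {L : Submodule ℝ (Euc n)} (hL : Submodule.span ℝ (intSpan b ∩ L) = L) :
    Submodule.span ℝ (intSpan (innerDualBasis b) ∩ Lᗮ) = Lᗮ := by
  obtain ⟨s, hsΛL, hs, hsli⟩ := exists_linearIndependent ℝ (intSpan b ∩ (L : Set (Euc n)))
  rw [hL] at hs
  have : Fintype s := hsli.setFinite.fintype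
  choose c hc using fun x : s ↦ (hsΛL x.2).1
  obtain ⟨w, hwli, hcw⟩ := exists_linearIndependent_orthogonal_dotProduct (S := ℝ) c
  set y := (innerDualBasis b).equivFun.symm ∘ fun j ↦ algebraMap ℤ ℝ ∘ w j
  have hyL : ∀ j, y j ∈ Lᗮ := by
    intro j
    rw [← hs, ← Submodule.span_singleton_le_iff_mem, ← Submodule.isOrtho_iff_le,
      Submodule.isOrtho_span]
    rintro _ rfl x hx
    have h := (Int.castRingHom ℝ).map_dotProduct (c ⟨x, hx⟩) (w j)
    rw [hcw, map_zero] at h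
    rw [real_inner_comm, show x = _ from hc ⟨x, hx⟩]
    simpa [y, Basis.equivFun_symm_apply, inner_sum_smul_innerDualBasis, Function.comp_def]
      using h.symm
  have hyli : LinearIndependent ℝ y := hwli.map' _ (LinearEquiv.ker _)
  have hdim : finrank ℝ (Submodule.span ℝ (Set.range y)) = finrank ℝ Lᗮ := by
    have hsum := L.finrank_add_finrank_orthogonal
    have hs_card := finrank_span_eq_card (ι := s) hsli
    rw [Subtype.range_coe, hs] at hs_card
    rw [finrank_eq_card_basis b] at hsum
    rw [finrank_span_eq_card hyli, Fintype.card_fin]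
    omega
  have hle : Submodule.span ℝ (intSpan (innerDualBasis b) ∩ Lᗮ) ≤ Lᗮ :=
    Submodule.span_le.mpr Set.inter_subset_right
  have hy_mem : Set.range y ⊆ intSpan (innerDualBasis b) ∩ Lᗮ := by
    rintro _ ⟨j, rfl⟩
    exact ⟨⟨w j, by simp [y, Basis.equivFun_symm_apply]⟩, hyL j⟩
  have hy_span : Submodule.span ℝ (Set.range y) = Lᗮ :=
    Submodule.eq_of_le_of_finrank_le ((Submodule.span_mono hy_mem).trans hle) hdim.ge
  exact le_antisymm hle (hy_span.ge.trans (Submodule.span_mono hy_mem))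

end DualLattice

/-- `L` is an `i`-dimensional lattice plane of `Λ` iff `L^⊥` is an
`(n-i)`-dimensional lattice plane of the dual lattice `Λ*`. -/
theorem stmt1 {n i : ℕ} (hi : i ≤ n) (Λ : Set (Euc n)) (hΛ : IsLattice Λ)
    (L : Submodule ℝ (Euc n)) :
    IsLatticePlane Λ i L ↔ IsLatticePlane (dualLattice Λ) (n - i) Lᗮ := by
  obtain ⟨b, rfl⟩ := hΛ
  have hsum := L.finrank_add_finrank_orthogonal
  rw [finrank_euclideanSpace_fin] at hsum
  rw [dualLattice_intSpan]
  refine ⟨fun ⟨hdim, hspan⟩ ↦ ⟨by omega, span_intSpan_innerDualBasis_inter_orthogonal b hspan⟩,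
    fun ⟨hdim, hspan⟩ ↦ ⟨by omega, ?_⟩⟩
  simpa [innerDualBasis_innerDualBasis, Submodule.orthogonal_orthogonal] using
    span_intSpan_innerDualBasis_inter_orthogonal (innerDualBasis b) hspan
end
end

section
/- The function f(m) = Γ(m/2+1)^{1/m}/√m is monotonically decreasing in m (for real m ≥ 1), and consequently for integers 1 ≤ i ≤ n, the ratio κ_n^{1/n}/κ_i^{1/i} = Γ(n/2+1)^{1/n}/Γ(i/2+1)^{1/i} ≥ √(i/n), where κ_d = π^{d/2}/Γ(d/2+1) is the volume of the d-dimensional unit ball. -/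
open scoped RealInnerProductSpace Pointwise
open MeasureTheory Filter

noncomputable section

/-! Put `S(x) = log Γ(x + 1) - x log x`; the claim amounts to `S(x) / x` being antitone on
`(0, ∞)`, which holds because `S` is concave on `[0, ∞)` with `S(0) = 0`. Concavity is seen on
Gauss's product approximants `S_n` of `S`, whose second derivative
`∑_{k=1}^n (x + k)⁻² - x⁻¹` is nonpositive by telescoping `(x + k)⁻² ≤ (x + k - 1)⁻¹ - (x + k)⁻¹`;
so the secant slopes `S_n(x) / x` decrease, and this passes to the limit `n → ∞`. -/

open Real Set

lemma sum_inv_add_sq_le_inv {x : ℝ} (hx : 0 < x) (n : ℕ) :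
    ∑ m ∈ Finset.range n, ((x + m + 1) ^ 2)⁻¹ ≤ x⁻¹ := by
  have hterm (m : ℕ) : ((x + m + 1) ^ 2)⁻¹ ≤ (x + m)⁻¹ - (x + (m + 1 : ℕ))⁻¹ := by
    have : (x + m)⁻¹ - (x + (m + 1 : ℕ))⁻¹ = ((x + m) * (x + m + 1))⁻¹ := by
      push_cast
      field_simp
      ring
    rw [this]
    exact inv_anti₀ (by positivity) (by nlinarith)
  calc ∑ m ∈ Finset.range n, ((x + m + 1) ^ 2)⁻¹
      ≤ ∑ m ∈ Finset.range n, ((x + m)⁻¹ - (x + (m + 1 : ℕ))⁻¹) :=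
        Finset.sum_le_sum fun m _ => hterm m
    _ = x⁻¹ - (x + n)⁻¹ := by
        rw [Finset.sum_range_sub' (fun m : ℕ => (x + m)⁻¹)]
        simp
    _ ≤ x⁻¹ := sub_le_self _ (by positivity)

lemma ConcaveOn.antitoneOn_div_of_map_zero {f : ℝ → ℝ} (hf : ConcaveOn ℝ (Ici 0) f)
    (h0 : f 0 = 0) : AntitoneOn (fun x => f x / x) (Ioi 0) := by
  intro x hx y hy hxy
  have := hf.slope_anti self_mem_Ici ⟨mem_Ici_of_Ioi hx, ne_of_gt hx⟩
    ⟨mem_Ici_of_Ioi hy, ne_of_gt hy⟩ hxy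
  simpa [slope_def_field, h0] using this

/-- Gauss's product approximation `x log n + log n! - ∑_{k=1}^n log (x + k)` of `log Γ(x + 1)`,
minus `x log x`. -/
def logGammaSuccSeqSubMulLog (n : ℕ) (x : ℝ) : ℝ :=
  x * log n + log n.factorial - ∑ m ∈ Finset.range n, log (x + m + 1) - x * log x

lemma logGammaSuccSeqSubMulLog_zero (n : ℕ) : logGammaSuccSeqSubMulLog n 0 = 0 := by
  rw [logGammaSuccSeqSubMulLog, ← Finset.prod_range_add_one_eq_factorial, Nat.cast_prod,
    log_prod fun m _ => by positivity]
  simp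

lemma concaveOn_logGammaSuccSeqSubMulLog (n : ℕ) :
    ConcaveOn ℝ (Ici 0) (logGammaSuccSeqSubMulLog n) := by
  refine concaveOn_of_hasDerivWithinAt2_nonpos (convex_Ici 0)
    (f' := fun x => log n - ∑ m ∈ Finset.range n, (x + m + 1)⁻¹ - (log x + 1))
    (f'' := fun x => ∑ m ∈ Finset.range n, ((x + m + 1) ^ 2)⁻¹ - x⁻¹) ?_ ?_ ?_ ?_
  · have hlog (m : ℕ) : ContinuousOn (fun x : ℝ => log (x + m + 1)) (Ici 0) :=
      ContinuousOn.log (by fun_prop) fun x hx => by simp only [mem_Ici] at hx; positivity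
    exact ((by fun_prop : Continuous fun x : ℝ => x * log n + log n.factorial).continuousOn.sub
      (continuousOn_finsetSum _ fun m _ => hlog m)).sub continuous_mul_log.continuousOn
  · rw [interior_Ici]
    intro x (hx : 0 < x)
    refine HasDerivAt.hasDerivWithinAt ?_
    have hlog (m : ℕ) : HasDerivAt (fun y : ℝ => log (y + m + 1)) (x + m + 1)⁻¹ x := by
      simpa using (((hasDerivAt_id x).add_const (m : ℝ)).add_const 1).log (by positivity)
    convert ((((hasDerivAt_id x).mul_const (log n)).add_const (log n.factorial)).sub
      (HasDerivAt.fun_sum (u := Finset.range n) fun m _ => hlog m)).sub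
      ((hasDerivAt_id x).mul (hasDerivAt_log hx.ne')) using 1
    · rfl
    · simp [hx.ne']
  · rw [interior_Ici]
    intro x (hx : 0 < x)
    refine HasDerivAt.hasDerivWithinAt ?_
    have hinv (m : ℕ) : HasDerivAt (fun y : ℝ => (y + m + 1)⁻¹) (-((x + m + 1) ^ 2)⁻¹) x := by
      simpa [neg_div] using
        (((hasDerivAt_id x).add_const (m : ℝ)).add_const 1).fun_inv (by positivity)
    convert ((HasDerivAt.fun_sum (u := Finset.range n) fun m _ => hinv m).const_sub (log n)).sub
      ((hasDerivAt_log hx.ne').add_const 1) using 1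
    · rfl
    · simp [Finset.sum_neg_distrib]
  · rw [interior_Ici]
    intro x (hx : 0 < x)
    exact sub_nonpos.mpr (sum_inv_add_sq_le_inv hx n)

lemma tendsto_logGammaSuccSeqSubMulLog {x : ℝ} (hx : 0 < x) :
    Tendsto (fun n => logGammaSuccSeqSubMulLog n x) atTop
      (nhds (log (Gamma (x + 1)) - x * log x)) := by
  have hseq (n : ℕ) :
      logGammaSuccSeqSubMulLog n x = BohrMollerup.logGammaSeq x n + log x - x * log x := by
    rw [logGammaSuccSeqSubMulLog, BohrMollerup.logGammaSeq, Finset.sum_range_succ']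
    push_cast
    ring_nf
  rw [Gamma_add_one hx.ne', log_mul hx.ne' (Gamma_pos_of_pos hx).ne']
  simp_rw [hseq]
  convert ((BohrMollerup.tendsto_log_gamma hx).add_const (log x)).sub_const (x * log x) using 2
  ring

lemma antitoneOn_log_Gamma_add_one_div_sub_log :
    AntitoneOn (fun x => log (Gamma (x + 1)) / x - log x) (Ioi 0) := by
  intro x (hx : 0 < x) y (hy : 0 < y) hxy
  have hseq (n : ℕ) := (concaveOn_logGammaSuccSeqSubMulLog n).antitoneOn_div_of_map_zero
    (logGammaSuccSeqSubMulLog_zero n) hx hy hxy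
  have := le_of_tendsto_of_tendsto' ((tendsto_logGammaSuccSeqSubMulLog hy).div_const y)
    ((tendsto_logGammaSuccSeqSubMulLog hx).div_const x) hseq
  rwa [sub_div, sub_div, mul_div_cancel_left₀ _ hx.ne', mul_div_cancel_left₀ _ hy.ne'] at this

lemma Gamma_half_add_one_rpow_div_sqrt_eq_exp {x : ℝ} (hx : 0 < x) :
    Gamma (x / 2 + 1) ^ (1 / x) / √x
      = exp ((log (Gamma (x / 2 + 1)) / (x / 2) - log (x / 2) - log 2) / 2) := by
  rw [sqrt_eq_rpow, rpow_def_of_pos (Gamma_pos_of_pos (by positivity)), rpow_def_of_pos hx,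
    ← exp_sub, log_div hx.ne' two_ne_zero]
  congr 1
  field_simp
  ring

lemma antitoneOn_Gamma_half_add_one_rpow_div_sqrt :
    AntitoneOn (fun x => Gamma (x / 2 + 1) ^ (1 / x) / √x) (Ioi 0) := by
  intro x (hx : 0 < x) y (hy : 0 < y) hxy
  simp only [Gamma_half_add_one_rpow_div_sqrt_eq_exp hx, Gamma_half_add_one_rpow_div_sqrt_eq_exp hy]
  have := antitoneOn_log_Gamma_add_one_div_sub_log (half_pos hx) (half_pos hy) (by linarith)
  exact exp_le_exp.mpr (by simp only at this; linarith)

lemma kappa_rpow_inv {d : ℕ} (hd : d ≠ 0) :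
    kappa d ^ (1 / d : ℝ) = √π / Gamma ((d : ℝ) / 2 + 1) ^ (1 / d : ℝ) := by
  rw [kappa, div_rpow (by positivity) (Gamma_pos_of_pos (by positivity)).le, ← rpow_mul pi_nonneg,
    sqrt_eq_rpow]
  congr 2
  field_simp

lemma kappa_rpow_inv_div_kappa_rpow_inv {i n : ℕ} (hi : i ≠ 0) (hn : n ≠ 0) :
    kappa n ^ (1 / n : ℝ) / kappa i ^ (1 / i : ℝ)
      = Gamma ((i : ℝ) / 2 + 1) ^ (1 / i : ℝ) / Gamma ((n : ℝ) / 2 + 1) ^ (1 / n : ℝ) := by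
  rw [kappa_rpow_inv hn, kappa_rpow_inv hi, div_div_div_comm,
    div_self (sqrt_pos.mpr pi_pos).ne', one_div_div]

lemma sqrt_div_le_Gamma_half_add_one_rpow_div {i n : ℕ} (hi : 0 < i) (hin : i ≤ n) :
    √((i : ℝ) / n) ≤
      Gamma ((i : ℝ) / 2 + 1) ^ (1 / i : ℝ) / Gamma ((n : ℝ) / 2 + 1) ^ (1 / n : ℝ) := by
  have hi0 : (0 : ℝ) < i := by exact_mod_cast hi
  have hin' : (i : ℝ) ≤ n := by exact_mod_cast hin
  have hsi : 0 < √(i : ℝ) := sqrt_pos.mpr hi0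
  have hsn : 0 < √(n : ℝ) := sqrt_pos.mpr (hi0.trans_le hin')
  have hGn : 0 < Gamma ((n : ℝ) / 2 + 1) ^ (1 / n : ℝ) :=
    rpow_pos_of_pos (Gamma_pos_of_pos (by positivity)) _
  have hmono := antitoneOn_Gamma_half_add_one_rpow_div_sqrt hi0 (hi0.trans_le hin') hin'
  rw [sqrt_div hi0.le, div_le_div_iff₀ hsn hGn, mul_comm]
  exact (div_le_div_iff₀ hsn hsi).mp hmono

/-- `Γ(m/2+1)^{1/m}/√m` is decreasing for `m ≥ 1`, and consequently
`κ_n^{1/n}/κ_i^{1/i} = Γ(i/2+1)^{1/i}/Γ(n/2+1)^{1/n} ≥ √(i/n)` for `1 ≤ i ≤ n`. -/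
theorem stmt10 :
    (∀ x y : ℝ, 1 ≤ x → x ≤ y →
      Real.Gamma (y / 2 + 1) ^ ((1 : ℝ) / y) / Real.sqrt y ≤
        Real.Gamma (x / 2 + 1) ^ ((1 : ℝ) / x) / Real.sqrt x) ∧
    (∀ i n : ℕ, 1 ≤ i → i ≤ n →
      Real.sqrt ((i : ℝ) / n) ≤ kappa n ^ ((1 : ℝ) / n) / kappa i ^ ((1 : ℝ) / i) ∧
      kappa n ^ ((1 : ℝ) / n) / kappa i ^ ((1 : ℝ) / i) =
        Real.Gamma ((i : ℝ) / 2 + 1) ^ ((1 : ℝ) / i) / Real.Gamma ((n : ℝ) / 2 + 1) ^ ((1 : ℝ) / n)) := by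
  refine ⟨fun x y hx hxy => ?_, fun i n hi hin => ?_⟩
  · have hx0 : 0 < x := zero_lt_one.trans_le hx
    exact antitoneOn_Gamma_half_add_one_rpow_div_sqrt hx0 (hx0.trans_le hxy) hxy
  · rw [kappa_rpow_inv_div_kappa_rpow_inv (by omega) (by omega)]
    exact ⟨sqrt_div_le_Gamma_half_add_one_rpow_div hi hin, rfl⟩

end
end
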